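/- arXiv:2201.11918 — 2 statements merged into one kernel-verified Lean document; each statement's English description precedes it below -/
import Mathlib

section
/- Let i be a source of a Dynkin quiver Q on Δ. Then φ_{s_iQ} = (ŝ_i)^{−1} ∘ φ_Q as maps Δ̂₀ → Φ⁺×ℤ (the set Δ̂₀ is the same for Q and s_iQ, since the height functions of Q and s_iQ agree modulo 2). -/
noncomputable section

open scoped BigOperators

/-- A finite Cartan datum: a connected Dynkin diagram of finite type with vertex set `I`,
Cartan matrix `c`, symmetrizers `d`, simple roots `α`, fundamental weights `ϖ`, an invariant
symmetric bilinear form `form` (normalized so that `(α,α) = 2` for short roots, i.e. some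
`d i = 1`), simple reflections `s` acting on the weight lattice `V`, the set of positive
roots `Φ`, the longest element `w0` (with induced involution `star`), and Coxeter number
`hcox`. -/
structure SSDatum where
  I : Type
  [fintypeI : Fintype I]
  [decEqI : DecidableEq I]
  [nonemptyI : Nonempty I]
  V : Type
  [acgV : AddCommGroup V]
  [modV : Module ℚ V]
  [decEqV : DecidableEq V]
  c : I → I → ℤ
  d : I → ℤ
  α : I → V
  ϖ : I → V
  form : V → V → ℚ
  s : I → (V ≃ₗ[ℚ] V)
  Φ : Finset V
  w0 : V ≃ₗ[ℚ] V
  star : I → I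
  hcox : ℤ
  c_diag : ∀ i, c i i = 2
  c_nonpos : ∀ i j, i ≠ j → c i j ≤ 0
  c_zero_sym : ∀ i j, c i j = 0 → c j i = 0
  connected : ∀ i j, Relation.ReflTransGen (fun a b => a ≠ b ∧ c a b ≠ 0) i j
  d_pos : ∀ i, 0 < d i
  d_one : ∃ i, d i = 1
  d_symmetrize : ∀ i j, d i * c i j = d j * c j i
  exists_basis : ∃ b : Module.Basis I ℚ V, ∀ i, b i = ϖ i
  form_symm : ∀ x y, form x y = form y x
  form_add : ∀ x y z, form (x + y) z = form x z + form y z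
  form_smul : ∀ (a : ℚ) (x y), form (a • x) y = a * form x y
  form_alpha : ∀ i j, form (α i) (α j) = (d i : ℚ) * (c i j : ℚ)
  form_alpha_omega : ∀ i j, form (α i) (ϖ j) = if i = j then (d i : ℚ) else 0
  form_inv : ∀ i x y, form (s i x) (s i y) = form x y
  s_omega : ∀ i j, s i (ϖ j) = ϖ j - (if i = j then (1 : ℚ) else 0) • α i
  s_alpha : ∀ i j, s i (α j) = α j - ((c i j : ℚ)) • α i
  alpha_mem : ∀ i, α i ∈ Φ
  zero_not_mem : (0 : V) ∉ Φ
  pos_comb : ∀ β ∈ Φ, ∃ f : I → ℕ, β = ∑ i, (f i : ℚ) • α i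
  s_perm : ∀ i, ∀ β ∈ Φ, β ≠ α i → s i β ∈ Φ
  w0_mem : w0 ∈ Subgroup.closure (Set.range s)
  w0_alpha : ∀ i, w0 (α i) = - α (star i)
  star_invol : ∀ i, star (star i) = i
  w0_neg : ∀ β ∈ Φ, -(w0 β) ∈ Φ
  hcox_pos : 0 < hcox
  hcox_card : hcox * (Fintype.card I : ℤ) = 2 * (Φ.card : ℤ)

attribute [instance] SSDatum.fintypeI SSDatum.decEqI SSDatum.nonemptyI
attribute [instance] SSDatum.acgV SSDatum.modV SSDatum.decEqV

namespace SSDatum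

variable (D : SSDatum)

/-- The underlying graph of the Dynkin diagram. -/
def graph : SimpleGraph D.I where
  Adj a b := a ≠ b ∧ D.c a b ≠ 0
  symm := by
    constructor
    intro a b h
    exact ⟨h.1.symm, fun hz => h.2 (D.c_zero_sym b a hz)⟩
  loopless := by
    constructor
    intro a h
    exact h.1 rfl

/-- The graph distance `d(i,j)` in the Dynkin diagram. -/
def dist (i j : D.I) : ℕ := D.graph.dist i j

/-- The product `s_{i_1} ⋯ s_{i_r}` of simple reflections along a word. -/
def wordProd (l : List D.I) : D.V ≃ₗ[ℚ] D.V := (l.map D.s).prod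

/-- The length of an element of the Weyl group. -/
def len (w : D.V ≃ₗ[ℚ] D.V) : ℕ :=
  sInf {n | ∃ l : List D.I, l.length = n ∧ D.wordProd l = w}

/-- A word is a reduced expression of its product. -/
def IsReducedWord (l : List D.I) : Prop := l.length = D.len (D.wordProd l)

/-- The map `ŵ` on `Φ⁺ × ℤ`:
`ŵ(β,k) = (wβ, k)` if `wβ ∈ Φ⁺` and `ŵ(β,k) = (−wβ, k−1)` otherwise. -/
def hat (w : D.V ≃ₗ[ℚ] D.V) (x : D.V × ℤ) : D.V × ℤ :=
  if w x.1 ∈ D.Φ then (w x.1, x.2) else (-(w x.1), x.2 - 1)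

/-- The map `(ŵ)⁻¹` on `Φ⁺ × ℤ`. -/
def hatInv (w : D.V ≃ₗ[ℚ] D.V) (x : D.V × ℤ) : D.V × ℤ :=
  if w⁻¹ x.1 ∈ D.Φ then (w⁻¹ x.1, x.2) else (-(w⁻¹ x.1), x.2 + 1)

/-- `ξ` is a height function on the Dynkin diagram. -/
def IsHeight (ξ : D.I → ℤ) : Prop :=
  ∀ i j, D.dist i j = 1 → ξ i - ξ j = 1 ∨ ξ j - ξ i = 1

/-- `i` is a source of the Dynkin quiver `(Δ, ξ)`. -/
def IsSource (ξ : D.I → ℤ) (i : D.I) : Prop :=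
  ∀ j, D.dist i j = 1 → ξ j < ξ i

/-- The height function of the reflected quiver `s_i Q`. -/
def rHeight (ξ : D.I → ℤ) (i : D.I) : D.I → ℤ :=
  fun j => if j = i then ξ i - 2 else ξ j

/-- A sequence in `I` is adapted to the Dynkin quiver `(Δ, ξ)`. -/
def Adapted (ξ : D.I → ℤ) : List D.I → Prop
  | [] => True
  | i :: l => D.IsSource ξ i ∧ Adapted (D.rHeight ξ i) l

/-- `τ` is the Coxeter element `τ_Q` attached to the Dynkin quiver with height function `ξ`:
it has a `Q`-adapted reduced expression in which each simple reflection occurs exactly once. -/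
def IsCoxeterFor (ξ : D.I → ℤ) (τ : D.V ≃ₗ[ℚ] D.V) : Prop :=
  ∃ l : List D.I, l.Nodup ∧ (∀ i, i ∈ l) ∧ D.Adapted ξ l ∧ D.wordProd l = τ

/-- `γ_i^Q = (1 - τ_Q) ϖ_i`. -/
def gam (τ : D.V ≃ₗ[ℚ] D.V) (i : D.I) : D.V := D.ϖ i - τ (D.ϖ i)

/-- The map `φ_Q : Δ̂₀ → Φ⁺ × ℤ`, defined inductively from
`φ_Q(i, ξ_i) = (γ_i^Q, 0)` by applying `(τ̂_Q)^{∓1}` when moving `p ↦ p ± 2`. -/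
def phi (ξ : D.I → ℤ) (τ : D.V ≃ₗ[ℚ] D.V) (i : D.I) (p : ℤ) : D.V × ℤ :=
  if p ≤ ξ i then (D.hat τ)^[((ξ i - p) / 2).toNat] (D.gam τ i, 0)
  else (D.hatInv τ)^[((p - ξ i) / 2).toNat] (D.gam τ i, 0)

/-- The function `η_{i,j}^Q : ℤ → ℚ`. -/
def eta (ξ : D.I → ℤ) (τ : D.V ≃ₗ[ℚ] D.V) (i j : D.I) (u : ℤ) : ℚ :=
  if (u + ξ j - ξ i - 1) % 2 = 0 then
    D.form (D.ϖ i) ((τ ^ ((u + ξ j - ξ i - 1) / 2)) (D.gam τ j))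
  else 0

end SSDatum

/-- The variable `t` of the field of formal Laurent series `ℚ((t))`. -/
def tq : LaurentSeries ℚ := HahnSeries.single 1 1

namespace SSDatum

variable (D : SSDatum)

/-- The symmetrized `t`-quantized Cartan matrix `B(t) = C(t) · D⁻¹`, where
`C(t)_{i,i} = t + t⁻¹` and `C(t)_{i,j} = c_{i,j}` for `i ≠ j`. -/
def Bt : Matrix D.I D.I (LaurentSeries ℚ) :=
  Matrix.of fun i j =>
    (if i = j then tq + tq⁻¹ else (D.c i j : LaurentSeries ℚ)) * ((D.d j : LaurentSeries ℚ))⁻¹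

/-- `b̃_{i,j}(u)`: the coefficient of `t^u` in the Laurent expansion of `(B(t)⁻¹)_{i,j}`. -/
def btilde (i j : D.I) (u : ℤ) : ℚ := ((D.Bt)⁻¹ i j).coeff u

/-- `Ñ(i,p;j,s) = b̃_{i,j}(p−s−1) − b̃_{i,j}(s−p−1) − b̃_{i,j}(p−s+1) + b̃_{i,j}(s−p+1)`. -/
def Ncal (i : D.I) (p : ℤ) (j : D.I) (q : ℤ) : ℚ :=
  D.btilde i j (p - q - 1) - D.btilde i j (q - p - 1)
    - D.btilde i j (p - q + 1) + D.btilde i j (q - p + 1)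

end SSDatum

/-!
Write `τ_Q = s_i w`, where `w` is the product of the other simple reflections in a `Q`-adapted
word; then `w` fixes `ϖ_i` and `τ_{s_iQ} = w s_i`. Both factorizations are length-additive, so
`τ̂_Q = ŝ_i ŵ` and `τ̂_{s_iQ} = ŵ ŝ_i` on `Φ⁺ × ℤ`, and `(ŝ_i)⁻¹` intertwines `τ̂_Q` with
`τ̂_{s_iQ}` (and likewise their inverses). Since `φ_Q(j, -)` is the `τ̂_Q`-orbit of `(γ_j^Q, 0)`,
it remains to compare starting points: `γ_j^{s_iQ} = s_i γ_j^Q` for `j ≠ i`, while for `j = i`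
the drop of the height by `2` is absorbed by the single step
`(ŝ_i)⁻¹ (γ_i^Q, 0) = (α_i, 1) = τ̂_{s_iQ}⁻¹ (γ_i^{s_iQ}, 0)`.
-/

lemma Function.iterate_semiconj_of_mapsTo {α : Type*} {S : Set α} {f g h : α → α}
    (hf : Set.MapsTo f S S) (hfg : ∀ x ∈ S, h (f x) = g (h x)) (n : ℕ) {x : α}
    (hx : x ∈ S) : h (f^[n] x) = g^[n] (h x) := by
  induction n generalizing x with
  | zero => rfl
  | succ n ih =>
    rw [Function.iterate_succ_apply, Function.iterate_succ_apply, ih (hf hx), hfg x hx]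

namespace SSDatum

variable (D : SSDatum)

lemma wordProd_cons (a : D.I) (l : List D.I) :
    D.wordProd (a :: l) = D.s a * D.wordProd l := by
  simp [wordProd]

lemma wordProd_append (l m : List D.I) :
    D.wordProd (l ++ m) = D.wordProd l * D.wordProd m := by
  simp [wordProd]

lemma s_s_apply (k : D.I) (x : D.V) : D.s k (D.s k x) = x := by
  obtain ⟨b, hb⟩ := D.exists_basis
  have h : (D.s k).toLinearMap ∘ₗ (D.s k).toLinearMap = LinearMap.id := by
    refine b.ext fun j => ?_
    simp only [LinearMap.comp_apply, LinearEquiv.coe_coe, LinearMap.id_apply, hb]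
    by_cases hkj : k = j
    · subst hkj
      simp only [D.s_omega, if_pos, one_smul, map_sub, D.s_alpha, D.c_diag]
      push_cast
      module
    · simp [D.s_omega, hkj]
  simpa using LinearMap.congr_fun h x

lemma s_inv (k : D.I) : (D.s k)⁻¹ = D.s k :=
  inv_eq_of_mul_eq_one_left (LinearEquiv.ext (D.s_s_apply k))

lemma s_alpha_self (k : D.I) : D.s k (D.α k) = -D.α k := by
  rw [D.s_alpha, D.c_diag]
  push_cast
  module

lemma s_omega_of_ne {k j : D.I} (h : k ≠ j) : D.s k (D.ϖ j) = D.ϖ j := by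
  simp [D.s_omega, h]

lemma s_commute {a b : D.I} (hab : D.c a b = 0) : D.s a * D.s b = D.s b * D.s a := by
  rcases eq_or_ne a b with rfl | hne
  · rfl
  have h1 : D.s a (D.α b) = D.α b := by simp [D.s_alpha, hab]
  have h2 : D.s b (D.α a) = D.α a := by simp [D.s_alpha, D.c_zero_sym a b hab]
  obtain ⟨bas, hb⟩ := D.exists_basis
  refine LinearEquiv.toLinearMap_injective (bas.ext fun j => ?_)
  show D.s a (D.s b (bas j)) = D.s b (D.s a (bas j))
  rw [hb]
  by_cases hbj : b = j <;> by_cases haj : a = j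
  · exact absurd (haj.trans hbj.symm) hne
  · subst hbj
    simp [D.s_omega, haj, h1]
  · subst haj
    simp [D.s_omega, hbj, h2]
  · simp [D.s_omega, haj, hbj]

/-- `d_j` times the `α_j`-coordinate. -/
def coord (j : D.I) : D.V →ₗ[ℚ] ℚ where
  toFun x := D.form x (D.ϖ j)
  map_add' x y := D.form_add x y (D.ϖ j)
  map_smul' a x := D.form_smul a x (D.ϖ j)

lemma coord_apply (j : D.I) (x : D.V) : D.coord j x = D.form x (D.ϖ j) := rfl

lemma coord_sum_alpha (j : D.I) (f : D.I → ℕ) :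
    D.coord j (∑ k, (f k : ℚ) • D.α k) = f j * D.d j := by
  simp only [map_sum, map_smul, coord_apply, D.form_alpha_omega, smul_eq_mul]
  simp

lemma coord_nonneg {β : D.V} (hβ : β ∈ D.Φ) (j : D.I) : 0 ≤ D.coord j β := by
  obtain ⟨f, rfl⟩ := D.pos_comb β hβ
  rw [coord_sum_alpha]
  exact mul_nonneg (Nat.cast_nonneg _) (by exact_mod_cast (D.d_pos j).le)

lemma exists_coord_pos {β : D.V} (hβ : β ∈ D.Φ) : ∃ j, 0 < D.coord j β := by
  by_contra! h
  obtain ⟨f, hf⟩ := D.pos_comb β hβ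
  have hf0 : ∀ j, (f j : ℚ) = 0 := fun j => by
    have hd : (0 : ℚ) < D.d j := by exact_mod_cast D.d_pos j
    have := le_antisymm (h j) (D.coord_nonneg hβ j)
    rw [hf, coord_sum_alpha] at this
    exact (mul_eq_zero.mp this).resolve_right hd.ne'
  have hβ0 : β = 0 := by simp [hf, hf0]
  exact D.zero_not_mem (hβ0 ▸ hβ)

lemma neg_not_mem {β : D.V} (hβ : β ∈ D.Φ) : -β ∉ D.Φ := fun hneg => by
  obtain ⟨j, hj⟩ := D.exists_coord_pos hβ
  have := D.coord_nonneg hneg j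
  rw [map_neg] at this
  linarith

def IsRoot (x : D.V) : Prop := x ∈ D.Φ ∨ -x ∈ D.Φ

def weyl : Subgroup (D.V ≃ₗ[ℚ] D.V) := Subgroup.closure (Set.range D.s)

lemma s_mem_weyl (k : D.I) : D.s k ∈ D.weyl := Subgroup.subset_closure ⟨k, rfl⟩

lemma wordProd_mem_weyl (l : List D.I) : D.wordProd l ∈ D.weyl :=
  D.weyl.list_prod_mem fun _ hx => by
    obtain ⟨k, -, rfl⟩ := List.mem_map.mp hx
    exact D.s_mem_weyl k

lemma wordProd_omega {l : List D.I} {j : D.I} (h : j ∉ l) : D.wordProd l (D.ϖ j) = D.ϖ j := by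
  induction l with
  | nil => rfl
  | cons a t ih =>
    rw [List.mem_cons, not_or] at h
    rw [wordProd_cons, LinearEquiv.mul_apply, ih h.2, D.s_omega_of_ne (Ne.symm h.1)]

def inversions (w : D.V ≃ₗ[ℚ] D.V) : Set D.V := {β | β ∈ D.Φ ∧ w β ∉ D.Φ}

def hatShift (δ : ℤ) (w : D.V ≃ₗ[ℚ] D.V) (x : D.V × ℤ) : D.V × ℤ :=
  if w x.1 ∈ D.Φ then (w x.1, x.2) else (-w x.1, x.2 + δ)

variable {D}

lemma IsRoot.of_mem {x : D.V} (h : x ∈ D.Φ) : D.IsRoot x := Or.inl h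

lemma IsRoot.neg_mem {x : D.V} (h : D.IsRoot x) (hx : x ∉ D.Φ) : -x ∈ D.Φ :=
  h.resolve_left hx

lemma IsRoot.mem_of_coord_pos {x : D.V} (h : D.IsRoot x) {j : D.I} (hj : 0 < D.coord j x) :
    x ∈ D.Φ :=
  h.resolve_right fun hneg => by
    have := D.coord_nonneg hneg j
    rw [map_neg] at this
    linarith

lemma IsRoot.s {x : D.V} (h : D.IsRoot x) (k : D.I) : D.IsRoot (D.s k x) := by
  have key : ∀ y ∈ D.Φ, D.IsRoot (D.s k y) := fun y hy => by
    by_cases hyk : y = D.α k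
    · exact Or.inr (by simpa [hyk, D.s_alpha_self] using D.alpha_mem k)
    · exact Or.inl (D.s_perm k y hy hyk)
  rcases h with h | h
  · exact key x h
  · simpa [IsRoot, or_comm] using key _ h

lemma weyl_induction {P : (D.V ≃ₗ[ℚ] D.V) → Prop} (hs : ∀ k, P (D.s k)) (h1 : P 1)
    (hmul : ∀ u v, P u → P v → P (u * v)) {w : D.V ≃ₗ[ℚ] D.V} (hw : w ∈ D.weyl) : P w := by
  induction hw using Subgroup.closure_induction'' with
  | mem _ hx => obtain ⟨k, rfl⟩ := hx; exact hs k
  | inv_mem _ hx => obtain ⟨k, rfl⟩ := hx; exact D.s_inv k ▸ hs k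
  | one => exact h1
  | mul u v _ _ hu hv => exact hmul u v hu hv

lemma IsRoot.weyl {x : D.V} (h : D.IsRoot x) {w : D.V ≃ₗ[ℚ] D.V} (hw : w ∈ D.weyl) :
    D.IsRoot (w x) :=
  weyl_induction (P := fun w => ∀ x, D.IsRoot x → D.IsRoot (w x)) (fun k _ hx => hx.s k)
    (fun _ hx => hx) (fun _ _ hu hv _ hx => hu _ (hv _ hx)) hw x h

lemma form_weyl_apply {w : D.V ≃ₗ[ℚ] D.V} (hw : w ∈ D.weyl) (x y : D.V) :
    D.form (w x) (w y) = D.form x y :=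
  weyl_induction (P := fun w => ∀ x y, D.form (w x) (w y) = D.form x y) D.form_inv
    (fun _ _ => rfl) (fun _ _ hu hv x y => (hu _ _).trans (hv x y)) hw x y

lemma apply_alpha_mem_of_apply_omega {w : D.V ≃ₗ[ℚ] D.V} (hw : w ∈ D.weyl) {j : D.I}
    (hwj : w (D.ϖ j) = D.ϖ j) : w (D.α j) ∈ D.Φ := by
  refine ((IsRoot.of_mem (D.alpha_mem j)).weyl hw).mem_of_coord_pos (j := j) ?_
  rw [coord_apply, ← hwj, form_weyl_apply hw, D.form_alpha_omega, if_pos rfl]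
  exact_mod_cast D.d_pos j

lemma rHeight_apply (ξ : D.I → ℤ) (a j : D.I) :
    D.rHeight ξ a j = ξ j - if j = a then 2 else 0 := by
  unfold rHeight
  split_ifs with h
  · rw [h]
  · ring

lemma rHeight_comm (ξ : D.I → ℤ) (a b : D.I) :
    D.rHeight (D.rHeight ξ a) b = D.rHeight (D.rHeight ξ b) a := by
  funext j
  simp only [rHeight_apply]
  ring

lemma foldl_rHeight_apply (l : List D.I) (ξ : D.I → ℤ) (j : D.I) :
    l.foldl D.rHeight ξ j = ξ j - 2 * l.count j := by
  induction l generalizing ξ with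
  | nil => simp
  | cons a t ih =>
    rw [List.foldl_cons, ih, rHeight_apply, List.count_cons]
    by_cases h : j = a
    · simp [h]
      ring
    · simp [h, Ne.symm h]

lemma IsSource.c_eq_zero {ξ : D.I → ℤ} {i k : D.I} (hi : D.IsSource ξ i)
    (hk : D.IsSource ξ k) (hne : i ≠ k) : D.c i k = 0 := by
  by_contra hc
  have hadj : D.graph.Adj i k := ⟨hne, hc⟩
  have := hi k (SimpleGraph.dist_eq_one_iff_adj.mpr hadj)
  have := hk i (SimpleGraph.dist_eq_one_iff_adj.mpr hadj.symm)
  omega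

lemma IsSource.rHeight {ξ : D.I → ℤ} {i : D.I} (hi : D.IsSource ξ i) {k : D.I} (hne : i ≠ k) :
    D.IsSource (D.rHeight ξ k) i := by
  intro j hj
  have := hi j hj
  simp only [rHeight_apply, if_neg hne]
  split_ifs <;> omega

lemma adapted_append (l m : List D.I) (ξ : D.I → ℤ) :
    D.Adapted ξ (l ++ m) ↔ D.Adapted ξ l ∧ D.Adapted (l.foldl D.rHeight ξ) m := by
  induction l generalizing ξ with
  | nil => simp [Adapted]
  | cons a t ih => simp only [List.cons_append, Adapted, ih, List.foldl_cons, and_assoc]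

lemma Adapted.wordProd_eq_s_mul_erase {ξ : D.I → ℤ} {l : List D.I} (hl : D.Adapted ξ l)
    {i : D.I} (hil : i ∈ l) (hi : D.IsSource ξ i) :
    D.wordProd l = D.s i * D.wordProd (l.erase i) ∧ D.Adapted (D.rHeight ξ i) (l.erase i) := by
  induction l generalizing ξ with
  | nil => simp at hil
  | cons a t ih =>
    obtain ⟨ha, ht⟩ := hl
    by_cases hai : a = i
    · subst hai
      exact ⟨by rw [List.erase_cons_head, D.wordProd_cons], by rwa [List.erase_cons_head]⟩
    have hne : i ≠ a := Ne.symm hai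
    obtain ⟨hw, hadapt⟩ := ih ht ((List.mem_cons.mp hil).resolve_left hne) (hi.rHeight hne)
    rw [List.erase_cons_tail (by simpa using hai), D.wordProd_cons, D.wordProd_cons, hw,
      ← mul_assoc, ← mul_assoc, D.s_commute (D.c_zero_sym i a (hi.c_eq_zero ha hne))]
    exact ⟨rfl, ha.rHeight hai, by rwa [rHeight_comm]⟩

lemma Adapted.wordProd_eq_of_perm {ξ : D.I → ℤ} {l₁ l₂ : List D.I} (hperm : l₁.Perm l₂)
    (h₁ : D.Adapted ξ l₁) (h₂ : D.Adapted ξ l₂) : D.wordProd l₁ = D.wordProd l₂ := by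
  induction l₂ generalizing l₁ ξ with
  | nil => rw [hperm.eq_nil]
  | cons a t ih =>
    obtain ⟨ha, ht⟩ := h₂
    obtain ⟨hw, hadapt⟩ := h₁.wordProd_eq_s_mul_erase (hperm.mem_iff.mpr List.mem_cons_self) ha
    rw [hw, D.wordProd_cons, ih (by simpa using hperm.erase a) hadapt ht]

/-- `i` is a source at the end because along the whole of `l` every height drops by `2`. -/
lemma adapted_erase_append {ξ : D.I → ℤ} {l : List D.I} (hnd : l.Nodup) (hfull : ∀ k, k ∈ l)
    (hl : D.Adapted ξ l) {i : D.I} (hi : D.IsSource ξ i) :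
    D.Adapted (D.rHeight ξ i) (l.erase i ++ [i]) := by
  rw [adapted_append]
  refine ⟨(hl.wordProd_eq_s_mul_erase (hfull i) hi).2, fun k hk => ?_, trivial⟩
  have hik : i ≠ k := by
    rintro rfl
    exact absurd (show D.graph.dist i i = 1 from hk) (by simp)
  have hcount : ∀ j, (l.erase i).count j = if j = i then 0 else 1 := fun j => by
    split_ifs with hj
    · exact List.count_eq_zero.mpr (hj ▸ hnd.not_mem_erase)
    · rw [List.count_erase_of_ne hj, List.count_eq_one_of_mem hnd (hfull j)]
  have := hi k hk
  simp only [foldl_rHeight_apply, rHeight_apply, hcount, if_neg (Ne.symm hik)]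
  simp
  omega

lemma IsCoxeterFor.exists_eq_s_mul {ξ : D.I → ℤ} {i : D.I} (hi : D.IsSource ξ i)
    {τ τ' : D.V ≃ₗ[ℚ] D.V} (hτ : D.IsCoxeterFor ξ τ)
    (hτ' : D.IsCoxeterFor (D.rHeight ξ i) τ') :
    ∃ w ∈ D.weyl, w (D.ϖ i) = D.ϖ i ∧ τ = D.s i * w ∧ τ' = w * D.s i := by
  obtain ⟨l, hnd, hfull, hl, rfl⟩ := hτ
  obtain ⟨l', hnd', hfull', hl', rfl⟩ := hτ'
  have hperm : l'.Perm (l.erase i ++ [i]) :=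
    ((List.perm_ext_iff_of_nodup hnd' hnd).mpr fun a => iff_of_true (hfull' a) (hfull a)).trans
      ((List.perm_cons_erase (hfull i)).trans (List.perm_append_singleton _ _).symm)
  refine ⟨D.wordProd (l.erase i), D.wordProd_mem_weyl _,
    D.wordProd_omega hnd.not_mem_erase, (hl.wordProd_eq_s_mul_erase (hfull i) hi).1, ?_⟩
  rw [hl'.wordProd_eq_of_perm hperm (adapted_erase_append hnd hfull hl hi), D.wordProd_append]
  simp [wordProd]

lemma gam_mem {ξ : D.I → ℤ} {τ : D.V ≃ₗ[ℚ] D.V} (hτ : D.IsCoxeterFor ξ τ) (j : D.I) :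
    D.gam τ j ∈ D.Φ := by
  obtain ⟨l, hnd, hfull, -, rfl⟩ := hτ
  obtain ⟨l₁, l₂, rfl⟩ := List.append_of_mem (hfull j)
  have hj₁ : j ∉ l₁ := fun h => List.disjoint_of_nodup_append hnd h List.mem_cons_self
  have hj₂ : j ∉ l₂ := (List.nodup_cons.mp (List.Nodup.of_append_right hnd)).1
  have hgam : D.gam (D.wordProd (l₁ ++ j :: l₂)) j = D.wordProd l₁ (D.α j) := by
    simp only [gam, D.wordProd_append, D.wordProd_cons, LinearEquiv.mul_apply,
      D.wordProd_omega hj₂, D.s_omega, if_pos, one_smul, map_sub, D.wordProd_omega hj₁]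
    abel
  rw [hgam]
  exact apply_alpha_mem_of_apply_omega (D.wordProd_mem_weyl l₁) (D.wordProd_omega hj₁)

lemma gam_mul_s_of_ne (w : D.V ≃ₗ[ℚ] D.V) {i j : D.I} (hj : j ≠ i) :
    D.gam (w * D.s i) j = D.s i (D.gam (D.s i * w) j) := by
  simp only [gam, LinearEquiv.mul_apply, map_sub, D.s_s_apply, D.s_omega_of_ne (Ne.symm hj)]

lemma gam_s_mul_self {w : D.V ≃ₗ[ℚ] D.V} {i : D.I} (hwi : w (D.ϖ i) = D.ϖ i) :
    D.gam (D.s i * w) i = D.α i := by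
  simp only [gam, LinearEquiv.mul_apply, hwi, D.s_omega, if_pos, one_smul]
  abel

lemma gam_mul_s_self {w : D.V ≃ₗ[ℚ] D.V} {i : D.I} (hwi : w (D.ϖ i) = D.ϖ i) :
    D.gam (w * D.s i) i = w (D.α i) := by
  simp only [gam, LinearEquiv.mul_apply, D.s_omega, if_pos, one_smul, map_sub, hwi]
  abel

lemma phi_sub_two_mul (ξ : D.I → ℤ) (τ : D.V ≃ₗ[ℚ] D.V) (j : D.I) (n : ℕ) :
    D.phi ξ τ j (ξ j - 2 * n) = (D.hat τ)^[n] (D.gam τ j, 0) := by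
  rw [phi, if_pos (by omega)]
  congr
  omega

lemma phi_add_two_mul (ξ : D.I → ℤ) (τ : D.V ≃ₗ[ℚ] D.V) (j : D.I) (n : ℕ) :
    D.phi ξ τ j (ξ j + 2 * n) = (D.hatInv τ)^[n] (D.gam τ j, 0) := by
  rcases n with _ | n
  · simp [phi]
  · rw [phi, if_neg (by omega)]
    congr
    omega

lemma inversions_subset_s_mul {w : D.V ≃ₗ[ℚ] D.V} (hw : w ∈ D.weyl) {i : D.I}
    (hwi : w⁻¹ (D.α i) ∈ D.Φ) : D.inversions w ⊆ D.inversions (D.s i * w) := by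
  rintro β ⟨hβ, hwβ⟩
  have hneg : -w β ∈ D.Φ := ((IsRoot.of_mem hβ).weyl hw).neg_mem hwβ
  have hne : -w β ≠ D.α i := fun h => D.neg_not_mem hwi (by
    rw [← h, map_neg, LinearEquiv.coe_inv, LinearEquiv.symm_apply_apply, neg_neg]
    exact hβ)
  refine ⟨hβ, fun h => D.neg_not_mem h ?_⟩
  simpa using D.s_perm i _ hneg hne

lemma inversions_subset_mul_s {w : D.V ≃ₗ[ℚ] D.V} {i : D.I} (hwi : w (D.α i) ∈ D.Φ) :
    D.inversions (D.s i) ⊆ D.inversions (w * D.s i) := by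
  rintro β ⟨hβ, hsβ⟩
  obtain rfl : β = D.α i := by_contra fun h => hsβ (D.s_perm i β hβ h)
  refine ⟨hβ, ?_⟩
  rw [LinearEquiv.mul_apply, D.s_alpha_self, map_neg]
  exact D.neg_not_mem hwi

lemma hat_eq_hatShift (w : D.V ≃ₗ[ℚ] D.V) : D.hat w = D.hatShift (-1) w := by
  funext x
  simp only [hat, hatShift, sub_eq_add_neg]

lemma hatInv_eq_hatShift (w : D.V ≃ₗ[ℚ] D.V) : D.hatInv w = D.hatShift 1 w⁻¹ := rfl

lemma hatShift_of_mem {δ : ℤ} {w : D.V ≃ₗ[ℚ] D.V} {x : D.V × ℤ} (h : w x.1 ∈ D.Φ) :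
    D.hatShift δ w x = (w x.1, x.2) := if_pos h

lemma hatShift_of_not_mem {δ : ℤ} {w : D.V ≃ₗ[ℚ] D.V} {x : D.V × ℤ} (h : w x.1 ∉ D.Φ) :
    D.hatShift δ w x = (-w x.1, x.2 + δ) := if_neg h

lemma hatShift_of_eq_neg {δ : ℤ} {w : D.V ≃ₗ[ℚ] D.V} {x : D.V × ℤ} {β : D.V}
    (hβ : β ∈ D.Φ) (h : w x.1 = -β) : D.hatShift δ w x = (β, x.2 + δ) := by
  rw [hatShift_of_not_mem (h ▸ D.neg_not_mem hβ), h, neg_neg]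

lemma hatShift_mapsTo (δ : ℤ) {w : D.V ≃ₗ[ℚ] D.V} (hw : w ∈ D.weyl) :
    Set.MapsTo (D.hatShift δ w) {x | x.1 ∈ D.Φ} {x | x.1 ∈ D.Φ} := fun x hx => by
  by_cases h : w x.1 ∈ D.Φ
  · rwa [hatShift_of_mem h]
  · rw [hatShift_of_not_mem h]
    exact ((IsRoot.of_mem hx).weyl hw).neg_mem h

lemma hat_mapsTo {w : D.V ≃ₗ[ℚ] D.V} (hw : w ∈ D.weyl) :
    Set.MapsTo (D.hat w) {x | x.1 ∈ D.Φ} {x | x.1 ∈ D.Φ} :=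
  hat_eq_hatShift w ▸ hatShift_mapsTo _ hw

lemma hatInv_mapsTo {w : D.V ≃ₗ[ℚ] D.V} (hw : w ∈ D.weyl) :
    Set.MapsTo (D.hatInv w) {x | x.1 ∈ D.Φ} {x | x.1 ∈ D.Φ} :=
  hatShift_mapsTo _ (inv_mem hw)

lemma hatShift_inv_hatShift {δ δ' : ℤ} (hδ : δ + δ' = 0) (w : D.V ≃ₗ[ℚ] D.V) {x : D.V × ℤ}
    (hx : x.1 ∈ D.Φ) : D.hatShift δ' w⁻¹ (D.hatShift δ w x) = x := by
  by_cases h : w x.1 ∈ D.Φ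
  · rw [hatShift_of_mem h, hatShift_of_mem (by simpa using hx)]
    simp
  · rw [hatShift_of_not_mem h, hatShift_of_not_mem (by simpa using D.neg_not_mem hx)]
    ext <;> simp [add_assoc, hδ]

lemma hatShift_s_hatShift_s {δ δ' : ℤ} (hδ : δ + δ' = 0) (k : D.I) {x : D.V × ℤ}
    (hx : x.1 ∈ D.Φ) : D.hatShift δ' (D.s k) (D.hatShift δ (D.s k) x) = x := by
  simpa [D.s_inv] using hatShift_inv_hatShift hδ (D.s k) hx

lemma hatShift_mul (δ : ℤ) {u v : D.V ≃ₗ[ℚ] D.V} (huv : u * v ∈ D.weyl)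
    (hN : D.inversions v ⊆ D.inversions (u * v)) {x : D.V × ℤ} (hx : x.1 ∈ D.Φ) :
    D.hatShift δ (u * v) x = D.hatShift δ u (D.hatShift δ v x) := by
  by_cases hv : v x.1 ∈ D.Φ
  · rw [hatShift_of_mem hv]
    rfl
  · have huv' : (u * v) x.1 ∉ D.Φ := (hN ⟨hx, hv⟩).2
    have hneg : -(u * v) x.1 ∈ D.Φ := ((IsRoot.of_mem hx).weyl huv).neg_mem huv'
    rw [hatShift_of_not_mem huv', hatShift_of_not_mem hv, hatShift_of_mem (by simpa using hneg)]
    simp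

section Reflection

variable {i : D.I} {w : D.V ≃ₗ[ℚ] D.V} (hw : w ∈ D.weyl) (hwi : w (D.ϖ i) = D.ϖ i)
include hw hwi

lemma inv_apply_alpha_mem : w⁻¹ (D.α i) ∈ D.Φ :=
  apply_alpha_mem_of_apply_omega (inv_mem hw)
    (by rw [← hwi, LinearEquiv.coe_inv, w.symm_apply_apply, hwi])

lemma hatInv_s_hat_s_mul {x : D.V × ℤ} (hx : x.1 ∈ D.Φ) :
    D.hatInv (D.s i) (D.hat (D.s i * w) x) = D.hat w x := by
  rw [hat_eq_hatShift, hat_eq_hatShift, hatInv_eq_hatShift, D.s_inv,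
    hatShift_mul _ (mul_mem (D.s_mem_weyl i) hw)
      (inversions_subset_s_mul hw (inv_apply_alpha_mem hw hwi)) hx,
    hatShift_s_hatShift_s (by norm_num) i (hatShift_mapsTo _ hw hx)]

lemma hat_mul_s_hatInv_s {x : D.V × ℤ} (hx : x.1 ∈ D.Φ) :
    D.hat (w * D.s i) (D.hatInv (D.s i) x) = D.hat w x := by
  rw [hat_eq_hatShift, hat_eq_hatShift, hatInv_eq_hatShift, D.s_inv,
    hatShift_mul _ (mul_mem hw (D.s_mem_weyl i))
      (inversions_subset_mul_s (apply_alpha_mem_of_apply_omega hw hwi))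
      (hatShift_mapsTo _ (D.s_mem_weyl i) hx),
    hatShift_s_hatShift_s (by norm_num) i hx]

lemma hatInv_s_hat_comm {x : D.V × ℤ} (hx : x.1 ∈ D.Φ) :
    D.hatInv (D.s i) (D.hat (D.s i * w) x) = D.hat (w * D.s i) (D.hatInv (D.s i) x) := by
  rw [hatInv_s_hat_s_mul hw hwi hx, hat_mul_s_hatInv_s hw hwi hx]

lemma hatInv_s_hatInv_comm {x : D.V × ℤ} (hx : x.1 ∈ D.Φ) :
    D.hatInv (D.s i) (D.hatInv (D.s i * w) x) =
      D.hatInv (w * D.s i) (D.hatInv (D.s i) x) := by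
  have hs := D.s_mem_weyl i
  have hwinv := inv_mem hw
  -- both sides factor as `ŝ_i⁻¹ (ŵ⁻¹ (ŝ_i⁻¹ x))`
  simp only [hatInv_eq_hatShift, mul_inv_rev, D.s_inv]
  rw [hatShift_mul _ (mul_mem hwinv hs) (inversions_subset_mul_s (inv_apply_alpha_mem hw hwi)) hx,
    hatShift_mul _ (mul_mem hs hwinv)
      (inversions_subset_s_mul hwinv (by simpa using apply_alpha_mem_of_apply_omega hw hwi))
      (hatShift_mapsTo _ hs hx)]

lemma phi_rHeight_self (ξ : D.I → ℤ) (k : ℤ) :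
    D.phi (D.rHeight ξ i) (w * D.s i) i (ξ i + 2 * k) =
      D.hatInv (D.s i) (D.phi ξ (D.s i * w) i (ξ i + 2 * k)) := by
  have hξi : D.rHeight ξ i i = ξ i - 2 := if_pos rfl
  have hτ := mul_mem (D.s_mem_weyl i) hw
  obtain ⟨n, rfl | rfl⟩ : ∃ n : ℕ, k = n ∨ k = -(n + 1 : ℕ) := by
    rcases k with n | n
    exacts [⟨n, .inl rfl⟩, ⟨n, .inr (by omega)⟩]
  · have hp : ξ i + 2 * n = D.rHeight ξ i i + 2 * (n + 1 : ℕ) := by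
      rw [hξi]
      push_cast
      ring
    have hstart : D.hatInv (w * D.s i) (w (D.α i), 0) = D.hatInv (D.s i) (D.α i, 0) := by
      rw [hatInv_eq_hatShift, hatInv_eq_hatShift, D.s_inv, mul_inv_rev, D.s_inv,
        hatShift_of_eq_neg (D.alpha_mem i) (by simp [D.s_alpha_self]),
        hatShift_of_eq_neg (D.alpha_mem i) (D.s_alpha_self i)]
    conv_lhs => rw [hp, phi_add_two_mul, Function.iterate_succ_apply, gam_mul_s_self hwi, hstart]
    rw [phi_add_two_mul, gam_s_mul_self hwi, Function.iterate_semiconj_of_mapsTo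
      (hatInv_mapsTo hτ) (fun _ => hatInv_s_hatInv_comm hw hwi) _ (D.alpha_mem i)]
  · have hp : ξ i + 2 * -((n + 1 : ℕ) : ℤ) = D.rHeight ξ i i - 2 * n := by
      rw [hξi]
      push_cast
      ring
    have hstart : D.hat w (D.α i, 0) = (w (D.α i), 0) := by
      rw [hat_eq_hatShift, hatShift_of_mem (apply_alpha_mem_of_apply_omega hw hwi)]
    conv_lhs => rw [hp, phi_sub_two_mul, gam_mul_s_self hwi, ← hstart]
    rw [mul_neg, ← sub_eq_add_neg, phi_sub_two_mul, Function.iterate_succ_apply,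
      gam_s_mul_self hwi, Function.iterate_semiconj_of_mapsTo (hat_mapsTo hτ)
        (fun _ => hatInv_s_hat_comm hw hwi) _ (hat_mapsTo hτ (D.alpha_mem i)),
      hatInv_s_hat_s_mul hw hwi (D.alpha_mem i)]

lemma phi_rHeight_of_ne (ξ : D.I → ℤ) {j : D.I} (hj : j ≠ i)
    (hγ : D.gam (D.s i * w) j ∈ D.Φ) (hγ' : D.gam (w * D.s i) j ∈ D.Φ) (k : ℤ) :
    D.phi (D.rHeight ξ i) (w * D.s i) j (ξ j + 2 * k) =
      D.hatInv (D.s i) (D.phi ξ (D.s i * w) j (ξ j + 2 * k)) := by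
  have hξj : D.rHeight ξ i j = ξ j := if_neg hj
  have hτ := mul_mem (D.s_mem_weyl i) hw
  have hstart : D.hatInv (D.s i) (D.gam (D.s i * w) j, 0) = (D.gam (w * D.s i) j, 0) := by
    rw [gam_mul_s_of_ne w hj] at hγ' ⊢
    rw [hatInv_eq_hatShift, D.s_inv, hatShift_of_mem hγ']
  rcases Int.eq_nat_or_neg k with ⟨n, rfl | rfl⟩
  · rw [← hξj, phi_add_two_mul, hξj, phi_add_two_mul, Function.iterate_semiconj_of_mapsTo
      (hatInv_mapsTo hτ) (fun _ => hatInv_s_hatInv_comm hw hwi) _ hγ, hstart]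
  · rw [mul_neg, ← sub_eq_add_neg, ← hξj, phi_sub_two_mul, hξj, phi_sub_two_mul,
      Function.iterate_semiconj_of_mapsTo (hat_mapsTo hτ) (fun _ => hatInv_s_hat_comm hw hwi)
      _ hγ, hstart]

end Reflection

end SSDatum

theorem stmt3_general (D : SSDatum) (ξ : D.I → ℤ)
    (i : D.I) (hi : D.IsSource ξ i)
    (τ τ' : D.V ≃ₗ[ℚ] D.V)
    (hτ : D.IsCoxeterFor ξ τ) (hτ' : D.IsCoxeterFor (D.rHeight ξ i) τ') :
    ∀ (j : D.I) (p : ℤ), 2 ∣ (p - ξ j) →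
      D.phi (D.rHeight ξ i) τ' j p = D.hatInv (D.s i) (D.phi ξ τ j p) := by
  obtain ⟨w, hw, hwi, rfl, rfl⟩ := hτ.exists_eq_s_mul hi hτ'
  rintro j p ⟨k, hk⟩
  obtain rfl : p = ξ j + 2 * k := by omega
  by_cases hj : j = i
  · subst hj
    exact SSDatum.phi_rHeight_self hw hwi ξ k
  · exact SSDatum.phi_rHeight_of_ne hw hwi ξ hj (SSDatum.gam_mem hτ j) (SSDatum.gam_mem hτ' j) k

/-- Let `i` be a source of a Dynkin quiver `Q` on `Δ`. Then
`φ_{s_iQ} = (ŝ_i)⁻¹ ∘ φ_Q` as maps `Δ̂₀ → Φ⁺ × ℤ`. -/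
theorem stmt3 (D : SSDatum) (ξ : D.I → ℤ) (hξ : D.IsHeight ξ)
    (i : D.I) (hi : D.IsSource ξ i)
    (τ τ' : D.V ≃ₗ[ℚ] D.V)
    (hτ : D.IsCoxeterFor ξ τ) (hτ' : D.IsCoxeterFor (D.rHeight ξ i) τ') :
    ∀ (j : D.I) (p : ℤ), 2 ∣ (p - ξ j) →
      D.phi (D.rHeight ξ i) τ' j p = D.hatInv (D.s i) (D.phi ξ τ j p) :=
  stmt3_general D ξ i hi τ τ' hτ hτ'
end
end

section
/- For all i,j ∈ I and all u ∈ ℤ with u ≤ d(i,j), one has b̃_{i,j}(u) = 0. -/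
/-!
Multiplying `B(t)⁻¹ B(t) = 1` on the right by `D` and comparing coefficients of `t^v` gives
`b̃_{i,j}(v-1) + b̃_{i,j}(v+1) + ∑_{k ≠ j} c_{k,j} b̃_{i,k}(v) = d_j δ_{i,j} δ_{v,0}`.
All `b̃_{i,k}(v)` vanish for `v` small enough, and the recurrence at `v = u - 1` expresses
`b̃_{i,j}(u)` through `b̃_{i,j}(u-2)` and the `b̃_{i,k}(u-1)` with `k` adjacent to `j`, for which
`u - 1 ≤ d(i,k)`; an induction on `u` concludes.
-/

noncomputable section

open scoped BigOperators

open HahnSeries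

theorem HahnSeries.coeff_intCast {Γ R : Type*} [Zero Γ] [PartialOrder Γ] [DecidableEq Γ]
    [Zero R] [IntCast R] (n : ℤ) (g : Γ) :
    (n : HahnSeries Γ R).coeff g = if g = 0 then (n : R) else 0 := by
  rw [← single_zero_intCast]
  convert coeff_single

theorem HahnSeries.coeff_mul_intCast {Γ R : Type*} [AddCommMonoid Γ] [PartialOrder Γ]
    [IsOrderedCancelAddMonoid Γ] [NonAssocRing R] (x : HahnSeries Γ R) (n : ℤ) (g : Γ) :
    (x * n).coeff g = x.coeff g * n := by
  rw [← single_zero_intCast, coeff_mul_single_zero]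

theorem coeff_mul_tq (x : LaurentSeries ℚ) (v : ℤ) : (x * tq).coeff v = x.coeff (v - 1) := by
  simpa [tq] using coeff_mul_single_add (x := x) (r := (1 : ℚ)) (a := v - 1) (b := 1)

theorem tq_inv : tq⁻¹ = single (-1 : ℤ) (1 : ℚ) :=
  inv_eq_of_mul_eq_one_right <| by rw [tq, single_mul_single]; norm_num

theorem coeff_mul_tq_inv (x : LaurentSeries ℚ) (v : ℤ) :
    (x * tq⁻¹).coeff v = x.coeff (v + 1) := by
  simpa [tq_inv] using coeff_mul_single_add (x := x) (r := (1 : ℚ)) (a := v + 1) (b := -1)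

namespace SSDatum

variable (D : SSDatum)

theorem dist_le_dist_add_one_of_adj (i : D.I) {k j : D.I} (h : D.graph.Adj k j) :
    D.dist i j ≤ D.dist i k + 1 := by
  simpa [dist, SimpleGraph.dist_eq_one_iff_adj.mpr h] using h.reachable.dist_triangle_right i

theorem inv_Bt_mul_cartan_apply (hdet : IsUnit D.Bt.det) (i j : D.I) :
    ∑ k, D.Bt⁻¹ i k * (if k = j then tq + tq⁻¹ else (D.c k j : LaurentSeries ℚ)) =
      if i = j then (D.d j : LaurentSeries ℚ) else 0 := by
  have h : ∑ k, D.Bt⁻¹ i k * ((if k = j then tq + tq⁻¹ else (D.c k j : LaurentSeries ℚ)) *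
      (D.d j : LaurentSeries ℚ)⁻¹) = if i = j then 1 else 0 := by
    have h := congr_fun (congr_fun (Matrix.nonsing_inv_mul _ hdet) i) j
    rwa [Matrix.mul_apply, Matrix.one_apply] at h
  have hd : (D.d j : LaurentSeries ℚ) ≠ 0 := fun h0 =>
    (D.d_pos j).ne' (by simpa [coeff_intCast] using congrArg (coeff · 0) h0)
  simp only [← mul_assoc, ← Finset.sum_mul, mul_inv_eq_iff_eq_mul₀ hd] at h
  rw [h]
  split_ifs <;> simp

theorem btilde_recurrence (hdet : IsUnit D.Bt.det) (i j : D.I) (v : ℤ) :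
    D.btilde i j (v - 1) + D.btilde i j (v + 1) +
        ∑ k ∈ Finset.univ.erase j, D.btilde i k v * D.c k j =
      if i = j ∧ v = 0 then (D.d j : ℚ) else 0 := by
  have h := congrArg (coeff · v) (D.inv_Bt_mul_cartan_apply hdet i j)
  rw [← Finset.add_sum_erase _ _ (Finset.mem_univ j),
    Finset.sum_congr rfl fun k hk => by rw [if_neg (Finset.ne_of_mem_erase hk)]] at h
  simp only [if_pos, coeff_add, coeff_sum, mul_add, coeff_mul_tq, coeff_mul_tq_inv,
    coeff_mul_intCast] at h
  simp only [btilde]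
  rw [h]
  by_cases hij : i = j <;> simp [hij, coeff_intCast]

theorem exists_btilde_eq_zero_of_lt (i : D.I) :
    ∃ M : ℤ, ∀ k v, v < M → D.btilde i k v = 0 :=
  ⟨Finset.univ.inf' Finset.univ_nonempty fun k => (D.Bt⁻¹ i k).order, fun k _ hv =>
    coeff_eq_zero_of_lt_order (hv.trans_le (Finset.inf'_le _ (Finset.mem_univ k)))⟩

theorem btilde_eq_zero_of_forall_lt (hdet : IsUnit D.Bt.det) {i j : D.I} {w : ℤ}
    (hw : w ≤ D.dist i j) (ih : ∀ k, ∀ v < w, v ≤ D.dist i k → D.btilde i k v = 0) :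
    D.btilde i j w = 0 := by
  have h := D.btilde_recurrence hdet i j (w - 1)
  have hprev : D.btilde i j (w - 1 - 1) = 0 := ih j _ (by omega) (by omega)
  have hnbrs : ∑ k ∈ Finset.univ.erase j, D.btilde i k (w - 1) * D.c k j = 0 := by
    refine Finset.sum_eq_zero fun k hk => ?_
    by_cases hc : D.c k j = 0
    · simp [hc]
    have hkj := D.dist_le_dist_add_one_of_adj i ⟨Finset.ne_of_mem_erase hk, hc⟩
    rw [ih k _ (by omega) (by omega), zero_mul]
  have hrhs : ¬(i = j ∧ w - 1 = 0) := by
    rintro ⟨rfl, hw1⟩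
    simp only [dist, SimpleGraph.dist_self, Nat.cast_zero] at hw
    omega
  simpa [hprev, hnbrs, hrhs] using h

end SSDatum

/-- For all `i,j ∈ I` and all `u ∈ ℤ` with `u ≤ d(i,j)`,
one has `b̃_{i,j}(u) = 0`. -/
theorem stmt14 (D : SSDatum) (hdet : IsUnit D.Bt.det)
    (i j : D.I) (u : ℤ) (hu : u ≤ (D.dist i j : ℤ)) :
    D.btilde i j u = 0 := by
  obtain ⟨M, hM⟩ := D.exists_btilde_eq_zero_of_lt i
  induction u using Int.strongRec (m := M) generalizing j with
  | lt w hw => exact hM j w hw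
  | ge w _ ih => exact D.btilde_eq_zero_of_forall_lt hdet hu fun k v hv => ih v hv k
end
end
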